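/- Combining the previous bounds: for the tensor-product OPE kernel K of rank p = m^d on [−1,1]^d with each one-dimensional factor satisfying the Christoffel–Darboux bound ∬(x−y)²|K_j|² dq_j dq_j ≤ 2a², the quantity (1/p²)∬ ‖z−w‖² |K(z,w)|² dq(z)dq(w) is at most 2a²·d·p^{−(1+1/d)}. -/

import Mathlib

/-!
Write ‖z − w‖² = ∑ᵢ (zᵢ − wᵢ)². The i-th summand of the integrand is a product of functions of
the coordinate pairs (z_j, w_j), so by Fubini its integral factorises as
∬ (x − y)² K_i² dq_i dq_i · ∏_{j ≠ i} ∬ K_j² dq_j dq_j ≤ 2a² · m^(d−1).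
Summing over i gives 2a² d m^(d−1), and m^(d−1) / p² = p^(−(1 + 1/d)) for p = m^d.
-/

open MeasureTheory Finset

theorem Fintype.prod_apply_update_mul {ι X M : Type*} [Fintype ι] [DecidableEq ι] [CommMonoid M]
    (f : ι → X → M) (g : X → M) (i : ι) (x : ι → X) :
    ∏ j, Function.update f i (fun u => g u * f i u) j (x j) = g (x i) * ∏ j, f j (x j) := by
  simp_rw [Function.apply_update (fun j (h : X → M) => h (x j)), prod_update_of_mem (mem_univ i),
    mul_assoc, sdiff_singleton_eq_erase, mul_prod_erase univ (fun j => f j (x j)) (mem_univ i)]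

namespace MeasureTheory

variable {𝕜 ι α β : Type*} [Fintype ι] [MeasurableSpace α] [MeasurableSpace β]
  {μ : ι → Measure α} {ν : ι → Measure β} [∀ i, SigmaFinite (μ i)] [∀ i, SigmaFinite (ν i)]

theorem integral_prod_pi_eq_prod [RCLike 𝕜] (f : ι → α × β → 𝕜) :
    ∫ zw : (ι → α) × (ι → β), ∏ i, f i (zw.1 i, zw.2 i) ∂(Measure.pi μ).prod (Measure.pi ν)
      = ∏ i, ∫ u, f i u ∂(μ i).prod (ν i) := by
  rw [← (measurePreserving_arrowProdEquivProdArrow α β ι μ ν).integral_comp']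
  exact integral_fintype_prod_eq_prod f

theorem Integrable.prod_pi_prod [NormedCommRing 𝕜] {f : ι → α × β → 𝕜}
    (hf : ∀ i, Integrable (f i) ((μ i).prod (ν i))) :
    Integrable (fun zw : (ι → α) × (ι → β) => ∏ i, f i (zw.1 i, zw.2 i))
      ((Measure.pi μ).prod (Measure.pi ν)) := by
  rw [← (measurePreserving_arrowProdEquivProdArrow α β ι μ ν).integrable_comp_emb
    (MeasurableEquiv.measurableEmbedding _)]
  exact Integrable.fintype_prod_dep hf

theorem integral_mul_prod_pi_eq [RCLike 𝕜] [DecidableEq ι] (f : ι → α × β → 𝕜) (g : α × β → 𝕜)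
    (i : ι) :
    ∫ zw : (ι → α) × (ι → β), g (zw.1 i, zw.2 i) * ∏ j, f j (zw.1 j, zw.2 j)
        ∂(Measure.pi μ).prod (Measure.pi ν)
      = (∫ u, g u * f i u ∂(μ i).prod (ν i)) *
          ∏ j ∈ univ.erase i, ∫ u, f j u ∂(μ j).prod (ν j) := by
  simp_rw [fun zw : (ι → α) × (ι → β) =>
    (Fintype.prod_apply_update_mul f g i fun j => (zw.1 j, zw.2 j)).symm, integral_prod_pi_eq_prod,
    Function.apply_update (fun j (h : α × β → 𝕜) => ∫ u, h u ∂(μ j).prod (ν j)),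
    prod_update_of_mem (mem_univ i), sdiff_singleton_eq_erase]

theorem Integrable.mul_prod_pi [NormedCommRing 𝕜] {f : ι → α × β → 𝕜} {g : α × β → 𝕜} {i : ι}
    (hf : ∀ j, Integrable (f j) ((μ j).prod (ν j)))
    (hg : Integrable (fun u => g u * f i u) ((μ i).prod (ν i))) :
    Integrable (fun zw : (ι → α) × (ι → β) => g (zw.1 i, zw.2 i) * ∏ j, f j (zw.1 j, zw.2 j))
      ((Measure.pi μ).prod (Measure.pi ν)) := by
  classical
  simp_rw [fun zw : (ι → α) × (ι → β) =>
    (Fintype.prod_apply_update_mul f g i fun j => (zw.1 j, zw.2 j)).symm]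
  refine Integrable.prod_pi_prod fun j => ?_
  rcases eq_or_ne j i with rfl | hji
  · simpa using hg
  · simpa [hji] using hf j

end MeasureTheory

theorem pow_pred_div_sq_eq_rpow {x : ℝ} (hx : 0 < x) {d : ℕ} (hd : 1 ≤ d) :
    x ^ (d - 1) / (x ^ d) ^ 2 = (x ^ d) ^ (-(1 + 1 / (d : ℝ))) := by
  have hexp : (d : ℝ) * (-(1 + 1 / (d : ℝ))) = -((d + 1 : ℕ) : ℝ) := by
    have : (d : ℝ) ≠ 0 := by positivity
    field_simp
    push_cast
    ring
  have hsq : (x ^ d) ^ 2 = x ^ (d - 1) * x ^ (d + 1) := by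
    rw [← pow_mul, ← pow_add]
    congr 1
    omega
  rw [← Real.rpow_natCast_mul hx.le, hexp, Real.rpow_neg hx.le, Real.rpow_natCast, hsq]
  field_simp

theorem tensor_kernel_variance_rate_general {d m : ℕ} (hd : 1 ≤ d) (hm : 1 ≤ m)
    (q : Fin d → Measure ℝ) [∀ j, IsProbabilityMeasure (q j)]
    (K : Fin d → ℝ → ℝ → ℝ) (a : ℝ)
    (hsq : ∀ j, Integrable (fun z : ℝ × ℝ => (K j z.1 z.2) ^ 2) ((q j).prod (q j)))
    (hwsq : ∀ j, Integrable (fun z : ℝ × ℝ => (z.1 - z.2) ^ 2 * (K j z.1 z.2) ^ 2)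
      ((q j).prod (q j)))
    (htrace : ∀ j, ∫ x, ∫ y, (K j x y) ^ 2 ∂(q j) ∂(q j) = m)
    (hCD : ∀ j, ∫ x, ∫ y, (x - y) ^ 2 * (K j x y) ^ 2 ∂(q j) ∂(q j) ≤ 2 * a ^ 2) :
    (1 / ((m : ℝ) ^ d) ^ 2) *
        ∫ zw : (Fin d → ℝ) × (Fin d → ℝ),
          (∑ i, (zw.1 i - zw.2 i) ^ 2) * ∏ j, (K j (zw.1 j) (zw.2 j)) ^ 2
          ∂((Measure.pi q).prod (Measure.pi q))
      ≤ 2 * a ^ 2 * d * ((m : ℝ) ^ d) ^ (-(1 + 1 / (d : ℝ))) := by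
  set k : Fin d → ℝ × ℝ → ℝ := fun j u => K j u.1 u.2 ^ 2
  have hk : ∀ j, ∫ u, k j u ∂(q j).prod (q j) = m :=
    fun j => (integral_prod _ (hsq j)).trans (htrace j)
  have hwk : ∀ j, ∫ u, (u.1 - u.2) ^ 2 * k j u ∂(q j).prod (q j) ≤ 2 * a ^ 2 :=
    fun j => (integral_prod _ (hwsq j)).trans_le (hCD j)
  have hterm : ∀ i, ∫ zw : (Fin d → ℝ) × (Fin d → ℝ), (zw.1 i - zw.2 i) ^ 2 *
      ∏ j, k j (zw.1 j, zw.2 j) ∂(Measure.pi q).prod (Measure.pi q) ≤ 2 * a ^ 2 * m ^ (d - 1) := by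
    intro i
    rw [integral_mul_prod_pi_eq k (fun u => (u.1 - u.2) ^ 2) i]
    simp_rw [hk, prod_const, card_erase_of_mem (mem_univ i), card_univ, Fintype.card_fin]
    exact mul_le_mul_of_nonneg_right (hwk i) (by positivity)
  have hsum : ∫ zw : (Fin d → ℝ) × (Fin d → ℝ), (∑ i, (zw.1 i - zw.2 i) ^ 2) *
      ∏ j, k j (zw.1 j, zw.2 j) ∂(Measure.pi q).prod (Measure.pi q)
        ≤ d * (2 * a ^ 2 * m ^ (d - 1)) := by
    simp_rw [sum_mul]
    rw [integral_finsetSum _ fun i _ => Integrable.mul_prod_pi hsq (hwsq i)]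
    exact (sum_le_sum fun i _ => hterm i).trans_eq (by simp)
  have hm0 : (0 : ℝ) < m := by exact_mod_cast hm
  calc _ ≤ 1 / ((m : ℝ) ^ d) ^ 2 * (d * (2 * a ^ 2 * m ^ (d - 1))) := by gcongr
    _ = _ := by rw [← pow_pred_div_sq_eq_rpow hm0 hd]; ring

/-- For the tensor-product OPE kernel of rank p = m^d with 1-dimensional
Christoffel–Darboux bounds 2a², one gets (1/p²)∬‖z−w‖²|K|² ≤ 2a²·d·p^{−(1+1/d)}. -/
theorem tensor_kernel_variance_rate {d m : ℕ} (hd : 1 ≤ d) (hm : 1 ≤ m)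
    (q : Fin d → Measure ℝ) [∀ j, IsProbabilityMeasure (q j)]
    (K : Fin d → ℝ → ℝ → ℝ) (a : ℝ)
    (hmeas : ∀ j, Measurable fun z : ℝ × ℝ => K j z.1 z.2)
    (hsq : ∀ j, Integrable (fun z : ℝ × ℝ => (K j z.1 z.2) ^ 2) ((q j).prod (q j)))
    (hwsq : ∀ j, Integrable (fun z : ℝ × ℝ => (z.1 - z.2) ^ 2 * (K j z.1 z.2) ^ 2)
      ((q j).prod (q j)))
    (htrace : ∀ j, ∫ x, ∫ y, (K j x y) ^ 2 ∂(q j) ∂(q j) = m)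
    (hCD : ∀ j, ∫ x, ∫ y, (x - y) ^ 2 * (K j x y) ^ 2 ∂(q j) ∂(q j) ≤ 2 * a ^ 2)
    (hint : Integrable (fun zw : (Fin d → ℝ) × (Fin d → ℝ) =>
        (∑ i, (zw.1 i - zw.2 i) ^ 2) * ∏ j, (K j (zw.1 j) (zw.2 j)) ^ 2)
      ((Measure.pi q).prod (Measure.pi q))) :
    (1 / ((m : ℝ) ^ d) ^ 2) *
        ∫ zw : (Fin d → ℝ) × (Fin d → ℝ),
          (∑ i, (zw.1 i - zw.2 i) ^ 2) * ∏ j, (K j (zw.1 j) (zw.2 j)) ^ 2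
          ∂((Measure.pi q).prod (Measure.pi q))
      ≤ 2 * a ^ 2 * d * ((m : ℝ) ^ d) ^ (-(1 + 1 / (d : ℝ))) :=
  tensor_kernel_variance_rate_general hd hm q K a hsq hwsq htrace hCD
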